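/- Let R be a commutative ring, equip the free algebra R⟨X₁,…,Xₙ⟩ with a weight ℕ-gradation determined by positive integer degrees deg Xᵢ = nᵢ, let ≺ be an ℕ-graded monomial ordering on the standard monomial basis B, and let G be a monic Gröbner basis of the ideal I = ⟨G⟩. If the monomial algebra R⟨X₁,…,Xₙ⟩/⟨LM(G)⟩ is a prime ring (i.e., whenever a, b satisfy a·r·b = 0 for all r, then a = 0 or b = 0), then both R⟨X₁,…,Xₙ⟩/⟨LH(G)⟩ and A = R⟨X₁,…,Xₙ⟩/I are prime rings. -/

import Mathlib

noncomputable section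
open MonoidAlgebra
open scoped Classical

/-- Words in the alphabet `X_1, ..., X_n`: the standard monomial basis `B`. -/
abbrev Word (n : ℕ) : Type := FreeMonoid (Fin n)

/-- The free `R`-algebra `R⟨X_1, ..., X_n⟩`, realized as the monoid algebra of the
free monoid on `n` letters over `R`. -/
abbrev FreeAlg (R : Type) [CommRing R] (n : ℕ) : Type := MonoidAlgebra R (Word n)

variable {R : Type} [CommRing R] {n : ℕ}

/-- The monomial (word) `w` viewed as an element of the free algebra. -/
def mono (R : Type) [CommRing R] {n : ℕ} (w : Word n) : FreeAlg R n :=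
  MonoidAlgebra.of R (Word n) w

/-- A monomial ordering: a well-ordering on words compatible with two-sided multiplication. -/
def IsMonomialOrder (n : ℕ) [LinearOrder (Word n)] : Prop :=
  WellFoundedLT (Word n) ∧ ∀ w u v s : Word n, u < v → w * u * s < w * v * s

/-- The leading monomial of `f` (with junk value `1` for `f = 0`). -/
def LMon [LinearOrder (Word n)] (f : FreeAlg R n) : Word n :=
  if h : f = 0 then 1 else f.coeff.support.max' (Finsupp.support_nonempty_iff.mpr (mt MonoidAlgebra.coeff_eq_zero.mp h))

/-- The leading coefficient of `f`. -/
def LCoef [LinearOrder (Word n)] (f : FreeAlg R n) : R := f.coeff (LMon f)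

/-- `f` is monic: it is nonzero and its leading coefficient is `1`. -/
def IsMonic [LinearOrder (Word n)] (f : FreeAlg R n) : Prop := f ≠ 0 ∧ LCoef f = 1

/-- `v` divides `u` as words: `u = w * v * s` for some words `w, s`. -/
def MDvd {n : ℕ} (v u : Word n) : Prop := ∃ w s : Word n, u = w * v * s

/-- `G` is a monic Gröbner basis of the two-sided ideal `I`: every element of `G` is monic,
and the leading monomial of every nonzero element of `I` is divisible by the leading
monomial of some element of `G`. -/
def IsMonicGB [LinearOrder (Word n)] (G : Set (FreeAlg R n))
    (I : TwoSidedIdeal (FreeAlg R n)) : Prop :=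
  (∀ g ∈ G, IsMonic g) ∧ ∀ f ∈ I, f ≠ 0 → ∃ g ∈ G, MDvd (LMon g) (LMon f)

/-- The set `LM(S)` of leading monomials of the nonzero elements of `S`. -/
def LMset [LinearOrder (Word n)] (S : Set (FreeAlg R n)) : Set (Word n) :=
  {w | ∃ f ∈ S, f ≠ 0 ∧ LMon f = w}

/-- The weight degree of a word, for the weights `deg Xᵢ = d i`. -/
def wdeg {n : ℕ} (d : Fin n → ℕ) (w : Word n) : ℕ := ((FreeMonoid.toList w).map d).sum

/-- The maximal weight degree occurring in `f`. -/
def maxdeg (d : Fin n → ℕ) (f : FreeAlg R n) : ℕ := f.coeff.support.sup (wdeg d)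

/-- The ℕ-leading homogeneous element `LH(f)` of `f`: the sum of the terms of `f` of
maximal weight degree. -/
def LH (d : Fin n → ℕ) (f : FreeAlg R n) : FreeAlg R n :=
  ∑ w ∈ f.coeff.support.filter (fun w => wdeg d w = maxdeg d f), MonoidAlgebra.single w (f.coeff w)

/-- The set `LH(S)` of leading homogeneous elements of the nonzero elements of `S`. -/
def LHset (d : Fin n → ℕ) (S : Set (FreeAlg R n)) : Set (FreeAlg R n) :=
  {x | ∃ f ∈ S, f ≠ 0 ∧ x = LH d f}

/-- An ℕ-graded monomial ordering with respect to the weights `d`: a monomial ordering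
such that words of smaller degree are smaller. -/
def IsGradedMonomialOrder {n : ℕ} (d : Fin n → ℕ) [LinearOrder (Word n)] : Prop :=
  IsMonomialOrder n ∧ ∀ u v : Word n, wdeg d u < wdeg d v → u < v

/-- The quotient ring of the free algebra by a two-sided ideal. -/
abbrev QuotRing (I : TwoSidedIdeal (FreeAlg R n)) : Type := I.ringCon.Quotient

/-!
Pick representatives `f, h` of `a, b` modulo `J` whose leading words are normal, i.e. not
divisible by any word of `LM(G)`. Their leading terms are then nonzero in the monomial algebra,
whose primality yields a word `w` with `LM(f) w LM(h)` normal and `LC(f) LC(h) ≠ 0`. In a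
monomial ordering the leading term of `f w h` is `LC(f) LC(h) LM(f) w LM(h)`, so the Gröbner
property forbids `f w h ∈ J`, i.e. `a w b ≠ 0`.

For `⟨LH(G)⟩` the same argument applies, because `LH(G)` is a monic Gröbner basis of `⟨LH(G)⟩`
with the same leading words as `G`: each homogeneous component of an element of `⟨LH(G)⟩` is the
top-degree part of an element of `⟨G⟩` of no larger degree, and the ordering is graded.
-/

open scoped Pointwise

def IsPrimeRing (A : Type*) [Ring A] : Prop :=
  ∀ a b : A, (∀ r, a * r * b = 0) → a = 0 ∨ b = 0

lemma TwoSidedIdeal.mk'_ringCon_eq_zero_iff {A : Type*} [Ring A] (J : TwoSidedIdeal A) (x : A) :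
    J.ringCon.mk' x = 0 ↔ x ∈ J := by
  rw [← map_zero J.ringCon.mk']
  exact (RingCon.eq _).trans (J.mem_iff x).symm

lemma TwoSidedIdeal.smul_mem_of_mem {K A : Type*} [CommSemiring K] [Ring A] [Algebra K A]
    (J : TwoSidedIdeal A) (c : K) {x : A} (hx : x ∈ J) : c • x ∈ J := by
  rw [Algebra.smul_def]; exact J.mul_mem_left _ _ hx

lemma mono_mul_mono (u v : Word n) : mono R u * mono R v = mono R (u * v) :=
  (map_mul (MonoidAlgebra.of R (Word n)) u v).symm

lemma coeff_mono_self (u : Word n) : (mono R u).coeff u = 1 := by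
  simp [mono]

lemma support_mono_subset (u : Word n) : (mono R u).coeff.support ⊆ {u} :=
  Finsupp.support_single_subset

lemma le_of_mem_support_mono [LinearOrder (Word n)] {u w : Word n}
    (hw : w ∈ (mono R u).coeff.support) : w ≤ u :=
  (Finset.mem_singleton.mp (support_mono_subset u hw)).le

lemma exists_eq_mul_mul_of_mem_support {u v w : Word n} {x : FreeAlg R n}
    (hw : w ∈ (mono R u * x * mono R v).coeff.support) :
    ∃ z ∈ x.coeff.support, w = u * z * v := by
  obtain ⟨y, hy, v', hv', rfl⟩ :=
    Finset.mem_mul.mp (MonoidAlgebra.support_coeff_mul_subset _ _ hw)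
  obtain ⟨u', hu', z, hz, rfl⟩ :=
    Finset.mem_mul.mp (MonoidAlgebra.support_coeff_mul_subset _ _ hy)
  rw [Finset.mem_singleton.mp (support_mono_subset u hu'),
    Finset.mem_singleton.mp (support_mono_subset v hv')]
  exact ⟨z, hz, rfl⟩

lemma span_induction_words {S : Set (FreeAlg R n)} {P : FreeAlg R n → Prop} (zero : P 0)
    (add : ∀ x y, P x → P y → P (x + y)) (smul : ∀ (c : R) x, P x → P (c • x))
    (mono_mul_mul_mono : ∀ u v, ∀ s ∈ S, P (mono R u * s * mono R v))
    {x : FreeAlg R n} (hx : x ∈ TwoSidedIdeal.span S) : P x := by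
  rw [TwoSidedIdeal.mem_span_iff_mem_addSubgroup_closure] at hx
  induction hx using AddSubgroup.closure_induction with
  | mem y hy =>
    obtain ⟨_, ⟨a, -, s, hs, rfl⟩, b, -, rfl⟩ := hy
    dsimp only
    induction a using MonoidAlgebra.induction_on with
    | of u =>
      induction b using MonoidAlgebra.induction_on with
      | of v => exact mono_mul_mul_mono u v s hs
      | add b₁ b₂ h₁ h₂ => rw [mul_add]; exact add _ _ h₁ h₂
      | smul c b h => rw [mul_smul_comm]; exact smul c _ h
    | add a₁ a₂ h₁ h₂ => rw [add_mul, add_mul]; exact add _ _ h₁ h₂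
    | smul c a h => rw [smul_mul_assoc, smul_mul_assoc]; exact smul c _ h
  | zero => exact zero
  | add x y _ _ hx hy => exact add x y hx hy
  | neg x _ hx => simpa using smul (-1) x hx

section MonomialOrder

variable [LinearOrder (Word n)]

namespace IsMonomialOrder

variable (hmo : IsMonomialOrder n)
include hmo

lemma mul_lt_mul_left {a b : Word n} (h : a < b) (c : Word n) : c * a < c * b := by
  simpa using hmo.2 c a b 1 h

lemma mul_lt_mul_right {a b : Word n} (h : a < b) (c : Word n) : a * c < b * c := by
  simpa using hmo.2 1 a b c h

lemma mul_le_mul {a b c d : Word n} (h₁ : a ≤ b) (h₂ : c ≤ d) : a * c ≤ b * d :=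
  calc a * c ≤ b * c := h₁.eq_or_lt.elim (fun h => h ▸ le_rfl) fun h =>
        (hmo.mul_lt_mul_right h c).le
    _ ≤ b * d := h₂.eq_or_lt.elim (fun h => h ▸ le_rfl) fun h => (hmo.mul_lt_mul_left h b).le

lemma eq_and_eq_of_mul_eq_mul {a b c d : Word n} (h₁ : a ≤ b) (h₂ : c ≤ d)
    (h : a * c = b * d) : a = b ∧ c = d := by
  refine ⟨h₁.eq_or_lt.resolve_right fun hab => ?_, h₂.eq_or_lt.resolve_right fun hcd => ?_⟩
  · exact (hmo.mul_lt_mul_right hab c).trans_le (hmo.mul_le_mul le_rfl h₂) |>.ne h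
  · exact (hmo.mul_lt_mul_left hcd a).trans_le (hmo.mul_le_mul h₁ le_rfl) |>.ne h

end IsMonomialOrder

lemma LMon_mem_support {f : FreeAlg R n} (hf : f ≠ 0) : LMon f ∈ f.coeff.support := by
  rw [LMon, dif_neg hf]; exact Finset.max'_mem _ _

lemma le_LMon {f : FreeAlg R n} {w : Word n} (hw : w ∈ f.coeff.support) : w ≤ LMon f := by
  have hf : f ≠ 0 := by rintro rfl; simp at hw
  rw [LMon, dif_neg hf]; exact Finset.le_max' _ w hw

lemma LCoef_ne_zero {f : FreeAlg R n} (hf : f ≠ 0) : LCoef f ≠ 0 :=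
  Finsupp.mem_support_iff.mp (LMon_mem_support hf)

lemma LMon_eq_of_forall_le {f : FreeAlg R n} {a : Word n} (ha : f.coeff a ≠ 0)
    (hle : ∀ w ∈ f.coeff.support, w ≤ a) : LMon f = a :=
  have hf : f ≠ 0 := by rintro rfl; exact ha rfl
  le_antisymm (hle _ (LMon_mem_support hf)) (le_LMon (Finsupp.mem_support_iff.mpr ha))

lemma LMon_lt_of_forall_le {f : FreeAlg R n} (hf : f ≠ 0) {a : Word n} (ha : f.coeff a = 0)
    (hle : ∀ w ∈ f.coeff.support, w ≤ a) : LMon f < a :=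
  (hle _ (LMon_mem_support hf)).lt_of_ne fun h => LCoef_ne_zero hf (by rwa [LCoef, h])

variable (hmo : IsMonomialOrder n)
include hmo

lemma le_mul_of_mem_support_mul {f g : FreeAlg R n} {a b : Word n}
    (hf : ∀ w ∈ f.coeff.support, w ≤ a) (hg : ∀ w ∈ g.coeff.support, w ≤ b) :
    ∀ w ∈ (f * g).coeff.support, w ≤ a * b := by
  intro w hw
  obtain ⟨x, hx, y, hy, rfl⟩ :=
    Finset.mem_mul.mp (MonoidAlgebra.support_coeff_mul_subset _ _ hw)
  exact hmo.mul_le_mul (hf x hx) (hg y hy)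

lemma coeff_mul_of_forall_le {f g : FreeAlg R n} {a b : Word n}
    (hf : ∀ w ∈ f.coeff.support, w ≤ a) (hg : ∀ w ∈ g.coeff.support, w ≤ b) :
    (f * g).coeff (a * b) = f.coeff a * g.coeff b :=
  MonoidAlgebra.coeff_mul_mul_of_uniqueMul fun _ _ hx hy h =>
    hmo.eq_and_eq_of_mul_eq_mul (hf _ hx) (hg _ hy) h

lemma coeff_mul_mul_of_forall_le {f g h : FreeAlg R n} {a b c : Word n}
    (hf : ∀ w ∈ f.coeff.support, w ≤ a) (hg : ∀ w ∈ g.coeff.support, w ≤ b)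
    (hh : ∀ w ∈ h.coeff.support, w ≤ c) :
    (f * g * h).coeff (a * b * c) = f.coeff a * g.coeff b * h.coeff c := by
  rw [coeff_mul_of_forall_le hmo (le_mul_of_mem_support_mul hmo hf hg) hh,
    coeff_mul_of_forall_le hmo hf hg]

end MonomialOrder

def IsReducible (S : Set (Word n)) (w : Word n) : Prop := ∃ v ∈ S, MDvd v w

section MonomialIdeal

variable {S : Set (Word n)}

lemma isReducible_of_mem_support_of_mem_span {x : FreeAlg R n}
    (hx : x ∈ TwoSidedIdeal.span (mono R '' S)) {w : Word n} (hw : w ∈ x.coeff.support) :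
    IsReducible S w := by
  refine span_induction_words (P := fun x => ∀ w ∈ x.coeff.support, IsReducible S w)
    (by simp) (fun x y hx hy w hw => ?_) (fun c x hx w hw => hx w (Finsupp.support_smul hw))
    (fun u s m hm w hw => ?_) hx w hw
  · rcases Finset.mem_union.mp (Finsupp.support_add hw) with h | h
    exacts [hx w h, hy w h]
  · obtain ⟨v, hv, rfl⟩ := hm
    rw [mono_mul_mono, mono_mul_mono] at hw
    rw [Finset.mem_singleton.mp (support_mono_subset _ hw)]
    exact ⟨v, hv, u, s, rfl⟩

lemma single_mem_span_mono_iff {w : Word n} {c : R} :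
    MonoidAlgebra.single w c ∈ TwoSidedIdeal.span (mono R '' S) ↔
      c = 0 ∨ IsReducible S w := by
  refine ⟨fun h => or_iff_not_imp_left.mpr fun hc =>
    isReducible_of_mem_support_of_mem_span h (by simp [hc]), ?_⟩
  rintro (rfl | ⟨v, hv, u, s, rfl⟩)
  · simp
  · have hmono : mono R (u * v * s) ∈ TwoSidedIdeal.span (mono R '' S) := by
      rw [← mono_mul_mono, ← mono_mul_mono]
      exact TwoSidedIdeal.mul_mem_right _ _ _
        (TwoSidedIdeal.mul_mem_left _ _ _ (TwoSidedIdeal.subset_span ⟨v, hv, rfl⟩))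
    simpa [mono] using TwoSidedIdeal.smul_mem_of_mem _ c hmono

-- `R` may have zero divisors, so `c * c' ≠ 0` is part of what primality provides.
lemma exists_not_isReducible_mul_mul
    (hP : IsPrimeRing (QuotRing (TwoSidedIdeal.span (mono R '' S)))) {u v : Word n}
    (hu : ¬IsReducible S u) (hv : ¬IsReducible S v) {c c' : R} (hc : c ≠ 0)
    (hc' : c' ≠ 0) : c * c' ≠ 0 ∧ ∃ w, ¬IsReducible S (u * w * v) := by
  set J := TwoSidedIdeal.span (mono R '' S)
  have hsingle : ∀ {w : Word n} {e : R}, e ≠ 0 → ¬IsReducible S w →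
      J.ringCon.mk' (MonoidAlgebra.single w e) ≠ 0 := by
    intro w e he hw
    rw [Ne, TwoSidedIdeal.mk'_ringCon_eq_zero_iff, single_mem_span_mono_iff]
    tauto
  by_contra! H
  have hmem : ∀ t, MonoidAlgebra.single u c * t * MonoidAlgebra.single v c' ∈ J := by
    intro t
    induction t using MonoidAlgebra.induction_on with
    | of w =>
      simp only [MonoidAlgebra.of_apply, MonoidAlgebra.single_mul_single, mul_one]
      exact single_mem_span_mono_iff.mpr (or_iff_not_imp_left.mpr fun hcc => H hcc w)
    | add t₁ t₂ h₁ h₂ => rw [mul_add, add_mul]; exact J.add_mem h₁ h₂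
    | smul e t ht => rw [mul_smul_comm, smul_mul_assoc]; exact J.smul_mem_of_mem e ht
  refine (hP (J.ringCon.mk' (MonoidAlgebra.single u c))
    (J.ringCon.mk' (MonoidAlgebra.single v c')) fun r => ?_).elim (hsingle hc hu) (hsingle hc' hv)
  obtain ⟨t, rfl⟩ := J.ringCon.mk'_surjective r
  rw [← map_mul, ← map_mul, TwoSidedIdeal.mk'_ringCon_eq_zero_iff]
  exact hmem t

end MonomialIdeal

section Reduction

variable [LinearOrder (Word n)] (hmo : IsMonomialOrder n) {G : Set (FreeAlg R n)}
  {J : TwoSidedIdeal (FreeAlg R n)} (hG : ∀ g ∈ G, IsMonic g) (hGJ : G ⊆ J)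
include hmo hG hGJ

lemma exists_sub_mem_LMon_lt {f : FreeAlg R n} (hf : IsReducible (LMset G) (LMon f)) :
    ∃ q, f - q ∈ J ∧ (q ≠ 0 → LMon q < LMon f) := by
  obtain ⟨_, ⟨g, hg, -, rfl⟩, u, s, hdvd⟩ := hf
  set t := mono R u * g * mono R s
  have ht_le : ∀ w ∈ t.coeff.support, w ≤ LMon f := hdvd ▸
    le_mul_of_mem_support_mul hmo
      (le_mul_of_mem_support_mul hmo (fun _ => le_of_mem_support_mono) fun _ => le_LMon)
      fun _ => le_of_mem_support_mono
  have ht_coeff : t.coeff (LMon f) = 1 := by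
    rw [hdvd, coeff_mul_mul_of_forall_le hmo (fun _ => le_of_mem_support_mono) (fun _ => le_LMon)
      (fun _ => le_of_mem_support_mono), coeff_mono_self, coeff_mono_self, ← LCoef, (hG g hg).2,
      mul_one, mul_one]
  refine ⟨f - LCoef f • t, ?_, fun hq => LMon_lt_of_forall_le hq ?_ fun w hw => ?_⟩
  · rw [sub_sub_cancel]
    exact J.smul_mem_of_mem _ (J.mul_mem_right _ _ (J.mul_mem_left _ _ (hGJ hg)))
  · simp [MonoidAlgebra.coeff_sub, ht_coeff, LCoef]
  · rcases Finset.mem_union.mp (Finsupp.support_sub hw) with h | h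
    exacts [le_LMon h, ht_le w (Finsupp.support_smul h)]

lemma exists_sub_mem_not_isReducible_LMon (f : FreeAlg R n) :
    ∃ f', f - f' ∈ J ∧ (f' ≠ 0 → ¬IsReducible (LMset G) (LMon f')) := by
  have := hmo.1
  induction hv : LMon f using WellFoundedLT.induction generalizing f with
  | _ v ih =>
  subst hv
  by_cases hf : f ≠ 0 ∧ IsReducible (LMset G) (LMon f)
  · obtain ⟨q, hfq, hq⟩ := exists_sub_mem_LMon_lt hmo hG hGJ hf.2
    by_cases hq0 : q = 0
    · exact ⟨0, hq0 ▸ hfq, fun h => (h rfl).elim⟩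
    · obtain ⟨f', hqf', hf'⟩ := ih _ (hq hq0) q rfl
      exact ⟨f', by simpa using J.add_mem hfq hqf', hf'⟩
  · exact ⟨f, by simp [J.zero_mem], fun hf0 hred => hf ⟨hf0, hred⟩⟩

end Reduction

theorem IsMonicGB.isPrimeRing_quotRing [LinearOrder (Word n)] (hmo : IsMonomialOrder n)
    {G : Set (FreeAlg R n)} {J : TwoSidedIdeal (FreeAlg R n)} (hGB : IsMonicGB G J) (hGJ : G ⊆ J)
    (hP : IsPrimeRing (QuotRing (TwoSidedIdeal.span (mono R '' LMset G)))) :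
    IsPrimeRing (QuotRing J) := by
  have hrep : ∀ a : QuotRing J, ∃ f, J.ringCon.mk' f = a ∧
      (f ≠ 0 → ¬IsReducible (LMset G) (LMon f)) := by
    intro a
    obtain ⟨f₀, rfl⟩ := J.ringCon.mk'_surjective a
    obtain ⟨f, hf, hirr⟩ := exists_sub_mem_not_isReducible_LMon hmo hGB.1 hGJ f₀
    exact ⟨f, ((RingCon.eq _).mpr ((J.rel_iff _ _).mpr hf)).symm, hirr⟩
  intro a b hab
  obtain ⟨f, rfl, hf⟩ := hrep a
  obtain ⟨h, rfl, hh⟩ := hrep b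
  by_contra! hne
  have hf0 : f ≠ 0 := by rintro rfl; exact hne.1 (map_zero _)
  have hh0 : h ≠ 0 := by rintro rfl; exact hne.2 (map_zero _)
  obtain ⟨hcc, w, hw⟩ := exists_not_isReducible_mul_mul hP (hf hf0) (hh hh0)
    (LCoef_ne_zero hf0) (LCoef_ne_zero hh0)
  have hY : f * mono R w * h ∈ J := by
    rw [← TwoSidedIdeal.mk'_ringCon_eq_zero_iff, map_mul, map_mul]
    exact hab _
  have hcoeff : (f * mono R w * h).coeff (LMon f * w * LMon h) = LCoef f * LCoef h := by
    rw [coeff_mul_mul_of_forall_le hmo (fun _ => le_LMon) (fun _ => le_of_mem_support_mono)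
      (fun _ => le_LMon), coeff_mono_self, mul_one, LCoef, LCoef]
  have hLMon : LMon (f * mono R w * h) = LMon f * w * LMon h :=
    LMon_eq_of_forall_le (hcoeff ▸ hcc) <| le_mul_of_mem_support_mul hmo
      (le_mul_of_mem_support_mul hmo (fun _ => le_LMon) fun _ => le_of_mem_support_mono)
      fun _ => le_LMon
  obtain ⟨g, hg, hdvd⟩ := hGB.2 _ hY fun h0 => hcc (by rw [← hcoeff, h0]; rfl)
  exact hw ⟨LMon g, ⟨g, hg, (hGB.1 g hg).1, rfl⟩, hLMon ▸ hdvd⟩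

section LeadingHomogeneous

variable (d : Fin n → ℕ)

lemma wdeg_mul (u v : Word n) : wdeg d (u * v) = wdeg d u + wdeg d v := by
  simp [wdeg, FreeMonoid.toList_mul]

lemma le_maxdeg {f : FreeAlg R n} {w : Word n} (hw : w ∈ f.coeff.support) :
    wdeg d w ≤ maxdeg d f :=
  Finset.le_sup hw

lemma coeff_LH (f : FreeAlg R n) (w : Word n) :
    (LH d f).coeff w = if wdeg d w = maxdeg d f then f.coeff w else 0 := by
  simp only [LH, MonoidAlgebra.coeff_sum, MonoidAlgebra.coeff_single, Finsupp.finsetSum_apply,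
    Finsupp.single_apply, Finset.sum_ite_eq', Finset.mem_filter, Finsupp.mem_support_iff]
  by_cases h : f.coeff w = 0 <;> simp [h]

lemma wdeg_eq_of_mem_support_LH {f : FreeAlg R n} {w : Word n}
    (hw : w ∈ (LH d f).coeff.support) : wdeg d w = maxdeg d f := by
  by_contra h
  simp [coeff_LH, h] at hw

lemma wdeg_lt_of_mem_support_sub_LH {f : FreeAlg R n} {w : Word n}
    (hw : w ∈ (f - LH d f).coeff.support) : wdeg d w < maxdeg d f := by
  have hfw : f.coeff w ≠ 0 := fun h => by simp [MonoidAlgebra.coeff_sub, coeff_LH, h] at hw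
  refine (le_maxdeg d (Finsupp.mem_support_iff.mpr hfw)).lt_of_ne fun h => ?_
  simp [MonoidAlgebra.coeff_sub, coeff_LH, h] at hw

variable [LinearOrder (Word n)] {d} (hord : IsGradedMonomialOrder d)
include hord

lemma wdeg_LMon {f : FreeAlg R n} (hf : f ≠ 0) : wdeg d (LMon f) = maxdeg d f :=
  (le_maxdeg d (LMon_mem_support hf)).antisymm <| Finset.sup_le fun _ hw =>
    not_lt.mp fun h => (le_LMon hw).not_gt (hord.2 _ _ h)

lemma coeff_LH_LMon {f : FreeAlg R n} (hf : f ≠ 0) : (LH d f).coeff (LMon f) = LCoef f := by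
  rw [coeff_LH, if_pos (wdeg_LMon hord hf), LCoef]

lemma LMon_LH {f : FreeAlg R n} (hf : f ≠ 0) : LMon (LH d f) = LMon f :=
  LMon_eq_of_forall_le ((coeff_LH_LMon hord hf).trans_ne (LCoef_ne_zero hf)) fun w hw =>
    le_LMon (Finsupp.mem_support_iff.mpr fun h => by simp [coeff_LH, h] at hw)

lemma LCoef_LH {f : FreeAlg R n} (hf : f ≠ 0) : LCoef (LH d f) = LCoef f := by
  rw [LCoef, LMon_LH hord hf, coeff_LH_LMon hord hf]

lemma LH_ne_zero {f : FreeAlg R n} (hf : f ≠ 0) : LH d f ≠ 0 := fun h =>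
  LCoef_ne_zero hf (by rw [← coeff_LH_LMon hord hf, h]; rfl)

lemma LMset_LHset (G : Set (FreeAlg R n)) : LMset (LHset d G) = LMset G := by
  ext w
  constructor
  · rintro ⟨_, ⟨f, hf, hf0, rfl⟩, -, rfl⟩
    exact ⟨f, hf, hf0, (LMon_LH hord hf0).symm⟩
  · rintro ⟨f, hf, hf0, rfl⟩
    exact ⟨LH d f, ⟨f, hf, hf0, rfl⟩, LH_ne_zero hord hf0, LMon_LH hord hf0⟩

end LeadingHomogeneous

def ComponentsLiftTo (d : Fin n → ℕ) (I : TwoSidedIdeal (FreeAlg R n)) (x : FreeAlg R n) :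
    Prop :=
  ∀ m, ∃ F ∈ I, (∀ w ∈ F.coeff.support, wdeg d w ≤ m) ∧
    ∀ w, wdeg d w = m → F.coeff w = x.coeff w

section ComponentsLiftTo

variable {d : Fin n → ℕ} {I : TwoSidedIdeal (FreeAlg R n)}

lemma componentsLiftTo_mono_mul_LH_mul_mono {g : FreeAlg R n} (hg : g ∈ I) (u v : Word n) :
    ComponentsLiftTo d I (mono R u * LH d g * mono R v) := by
  intro m
  -- `u g v` differs from `u LH(g) v` only below the degree of the latter, which is homogeneous.
  by_cases hm : wdeg d u + maxdeg d g + wdeg d v ≤ m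
  · refine ⟨mono R u * g * mono R v, I.mul_mem_right _ _ (I.mul_mem_left _ _ hg),
      fun w hw => ?_, fun w hw => ?_⟩
    · obtain ⟨z, hz, rfl⟩ := exists_eq_mul_mul_of_mem_support hw
      have := le_maxdeg d hz
      rw [wdeg_mul, wdeg_mul]
      omega
    · rw [← sub_eq_zero, ← Finsupp.sub_apply, ← MonoidAlgebra.coeff_sub, ← sub_mul,
        ← mul_sub, ← Finsupp.notMem_support_iff]
      intro hw'
      obtain ⟨z, hz, rfl⟩ := exists_eq_mul_mul_of_mem_support hw'
      have := wdeg_lt_of_mem_support_sub_LH d hz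
      rw [wdeg_mul, wdeg_mul] at hw
      omega
  · refine ⟨0, I.zero_mem, by simp, fun w hw => ?_⟩
    rw [MonoidAlgebra.coeff_zero, Finsupp.zero_apply, eq_comm, ← Finsupp.notMem_support_iff]
    intro hw'
    obtain ⟨z, hz, rfl⟩ := exists_eq_mul_mul_of_mem_support hw'
    have := wdeg_eq_of_mem_support_LH d hz
    rw [wdeg_mul, wdeg_mul] at hw
    omega

lemma componentsLiftTo_of_mem_span_LHset {G : Set (FreeAlg R n)} {x : FreeAlg R n}
    (hx : x ∈ TwoSidedIdeal.span (LHset d G)) : ComponentsLiftTo d (TwoSidedIdeal.span G) x := by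
  refine span_induction_words (fun m => ⟨0, TwoSidedIdeal.zero_mem _, by simp, fun _ _ => rfl⟩)
    (fun x y hx hy m => ?_) (fun c x hx m => ?_) ?_ hx
  · obtain ⟨F₁, hF₁, hle₁, heq₁⟩ := hx m
    obtain ⟨F₂, hF₂, hle₂, heq₂⟩ := hy m
    refine ⟨F₁ + F₂, TwoSidedIdeal.add_mem _ hF₁ hF₂, fun w hw => ?_, fun w hw => ?_⟩
    · rcases Finset.mem_union.mp (Finsupp.support_add hw) with h | h
      exacts [hle₁ w h, hle₂ w h]
    · simp [MonoidAlgebra.coeff_add, heq₁ w hw, heq₂ w hw]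
  · obtain ⟨F, hF, hle, heq⟩ := hx m
    exact ⟨c • F, TwoSidedIdeal.smul_mem_of_mem _ c hF,
      fun w hw => hle w (Finsupp.support_smul hw), fun w hw => by simp [heq w hw]⟩
  · rintro u v _ ⟨g, hg, -, rfl⟩
    exact componentsLiftTo_mono_mul_LH_mul_mono (TwoSidedIdeal.subset_span hg) u v

/-- In a graded ordering the leading word of `x` lies in its top component, so any lift of that
component has the same leading word. -/
lemma ComponentsLiftTo.exists_LMon_eq [LinearOrder (Word n)] (hord : IsGradedMonomialOrder d)
    {x : FreeAlg R n} (h : ComponentsLiftTo d I x) (hx : x ≠ 0) :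
    ∃ F ∈ I, F ≠ 0 ∧ LMon F = LMon x := by
  obtain ⟨F, hF, hle, heq⟩ := h (wdeg d (LMon x))
  have hcoeff : F.coeff (LMon x) ≠ 0 := (heq _ rfl).trans_ne (LCoef_ne_zero hx)
  refine ⟨F, hF, fun h0 => hcoeff (by rw [h0]; rfl), LMon_eq_of_forall_le hcoeff fun w hw => ?_⟩
  rcases (hle w hw).lt_or_eq with hlt | hdeg
  · exact (hord.2 _ _ hlt).le
  · rw [Finsupp.mem_support_iff, heq w hdeg, ← Finsupp.mem_support_iff] at hw
    exact le_LMon hw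

end ComponentsLiftTo

lemma IsMonicGB.LHset [LinearOrder (Word n)] {d : Fin n → ℕ} (hord : IsGradedMonomialOrder d)
    {G : Set (FreeAlg R n)} (hGB : IsMonicGB G (TwoSidedIdeal.span G)) :
    IsMonicGB (LHset d G) (TwoSidedIdeal.span (LHset d G)) := by
  refine ⟨?_, fun x hx hx0 => ?_⟩
  · rintro _ ⟨g, hg, hg0, rfl⟩
    exact ⟨LH_ne_zero hord hg0, (LCoef_LH hord hg0).trans (hGB.1 g hg).2⟩
  · obtain ⟨F, hF, hF0, hLMon⟩ :=
      (componentsLiftTo_of_mem_span_LHset hx).exists_LMon_eq hord hx0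
    obtain ⟨g, hg, hdvd⟩ := hGB.2 F hF hF0
    have hg0 := (hGB.1 g hg).1
    exact ⟨LH d g, ⟨g, hg, hg0, rfl⟩, by rwa [LMon_LH hord hg0, ← hLMon]⟩

theorem prime_lifts_general [LinearOrder (Word n)]
    (d : Fin n → ℕ) (hord : IsGradedMonomialOrder d)
    (G : Set (FreeAlg R n)) (hGB : IsMonicGB G (TwoSidedIdeal.span G))
    (hP : ∀ a b : QuotRing (TwoSidedIdeal.span (mono R '' LMset G)),
      (∀ r, a * r * b = 0) → a = 0 ∨ b = 0) :
    (∀ a b : QuotRing (TwoSidedIdeal.span (LHset d G)),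
      (∀ r, a * r * b = 0) → a = 0 ∨ b = 0) ∧
    (∀ a b : QuotRing (TwoSidedIdeal.span G),
      (∀ r, a * r * b = 0) → a = 0 ∨ b = 0) :=
  ⟨(hGB.LHset hord).isPrimeRing_quotRing hord.1 TwoSidedIdeal.subset_span
      (by rwa [LMset_LHset hord]),
    hGB.isPrimeRing_quotRing hord.1 TwoSidedIdeal.subset_span hP⟩

/-- If `G` is a monic Gröbner basis of `I = ⟨G⟩` with respect to an
ℕ-graded monomial ordering and the monomial algebra `R⟨X⟩/⟨LM(G)⟩` is a prime ring, then so are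
`R⟨X⟩/⟨LH(G)⟩` and `A = R⟨X⟩/I`. -/
theorem prime_lifts [LinearOrder (Word n)]
    (d : Fin n → ℕ) (hd : ∀ i, 0 < d i) (hord : IsGradedMonomialOrder d)
    (G : Set (FreeAlg R n)) (hGB : IsMonicGB G (TwoSidedIdeal.span G))
    (hP : ∀ a b : QuotRing (TwoSidedIdeal.span (mono R '' LMset G)),
      (∀ r, a * r * b = 0) → a = 0 ∨ b = 0) :
    (∀ a b : QuotRing (TwoSidedIdeal.span (LHset d G)),
      (∀ r, a * r * b = 0) → a = 0 ∨ b = 0) ∧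
    (∀ a b : QuotRing (TwoSidedIdeal.span G),
      (∀ r, a * r * b = 0) → a = 0 ∨ b = 0) :=
  prime_lifts_general d hord G hGB hP
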